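/- The star product on ℂ[z¹,z²,y¹,y²] is associative and unital: for all polynomials f, g, h one has (f⋆g)⋆h = f⋆(g⋆h), and 1⋆f = f⋆1 = f. -/

import Mathlib

/-!
Lemma 1 of the paper (sector without Klein operators), realized on the
polynomial algebra ℂ[z¹,z²,y¹,y²] = `MvPolynomial (Fin 4) ℂ`, where the
variables `0, 1` are `z¹, z²` and `2, 3` are `y¹, y²`.
-/

open MvPolynomial

noncomputable section

abbrev P4 : Type := MvPolynomial (Fin 4) ℂ

/-- the variable `z^β`. -/
def zvar (β : Fin 2) : Fin 4 := ⟨β.val, by omega⟩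

/-- the variable `y^β`. -/
def yvar (β : Fin 2) : Fin 4 := ⟨β.val + 2, by omega⟩

/-- The symplectic form: ε^{12} = 1, ε^{21} = −1, diagonal entries zero. -/
def eps (a b : Fin 2) : ℂ :=
  if a = 0 ∧ b = 1 then 1 else if a = 1 ∧ b = 0 then -1 else 0

/-- `∂_{y^β} + ∂_{z^β}`. -/
def Dplus (β : Fin 2) (f : P4) : P4 :=
  pderiv (yvar β) f + pderiv (zvar β) f

/-- `∂_{y^γ} − ∂_{z^γ}`. -/
def Dminus (γ : Fin 2) (f : P4) : P4 :=
  pderiv (yvar γ) f - pderiv (zvar γ) f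

/-- Iterated application of a family of operators. -/
def applyIter {k : ℕ} (D : Fin 2 → P4 → P4) (v : Fin k → Fin 2) (f : P4) : P4 :=
  (List.ofFn v).foldr (fun b acc => D b acc) f

/-- The higher-spin star product
`f ⋆ g := Σ_{k≥0} (i^k/k!) Σ_{β,γ} ε^{β₁γ₁}⋯ε^{β_kγ_k}
  [(∂_y+∂_z)_{β₁}⋯(∂_y+∂_z)_{β_k} f]·[(∂_y−∂_z)_{γ₁}⋯(∂_y−∂_z)_{γ_k} g]`;
the sum over `k` is finite since each term with `k > totalDegree f` vanishes. -/
def hsStar (f g : P4) : P4 :=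
  ∑ k ∈ Finset.range (f.totalDegree + 1),
    (Complex.I ^ k / (Nat.factorial k : ℂ)) •
      ∑ idx : Fin k → Fin 2 × Fin 2,
        (∏ j, eps (idx j).1 (idx j).2) •
          (applyIter Dplus (fun j => (idx j).1) f *
            applyIter Dminus (fun j => (idx j).2) g)

-- pderiv commute
lemma pd_comm (i j : Fin 4) (f : P4) : pderiv i (pderiv j f) = pderiv j (pderiv i f) := by
  induction f using MvPolynomial.induction_on' with
  | add p q hp hq => simp [hp, hq]
  | monomial s a =>
    rcases eq_or_ne i j with rfl | hij
    · rfl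
    · simp only [pderiv_monomial]
      have h1 : ((s - Finsupp.single j 1 : Fin 4 →₀ ℕ)) i = s i := by
        simp [Finsupp.tsub_apply, Finsupp.single_apply, Ne.symm hij]
      have h2 : ((s - Finsupp.single i 1 : Fin 4 →₀ ℕ)) j = s j := by
        simp [Finsupp.tsub_apply, Finsupp.single_apply, hij]
      rw [h1, h2, tsub_right_comm, mul_right_comm]

-- bundled linear maps
def DpL (β : Fin 2) : P4 →ₗ[ℂ] P4 :=
  (pderiv (yvar β)).toLinearMap + (pderiv (zvar β)).toLinearMap
def DmL (γ : Fin 2) : P4 →ₗ[ℂ] P4 :=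
  (pderiv (yvar γ)).toLinearMap - (pderiv (zvar γ)).toLinearMap

lemma DpL_apply (β : Fin 2) (f : P4) : DpL β f = Dplus β f := rfl
lemma DmL_apply (γ : Fin 2) (f : P4) : DmL γ f = Dminus γ f := rfl

lemma Dplus_add (β : Fin 2) (f g : P4) : Dplus β (f + g) = Dplus β f + Dplus β g := by
  rw [← DpL_apply, map_add]; rfl
lemma Dplus_smul (β : Fin 2) (a : ℂ) (f : P4) : Dplus β (a • f) = a • Dplus β f := by
  rw [← DpL_apply, map_smul]; rfl
lemma Dplus_zero (β : Fin 2) : Dplus β (0 : P4) = 0 := by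
  rw [← DpL_apply, map_zero]
lemma Dminus_add (γ : Fin 2) (f g : P4) : Dminus γ (f + g) = Dminus γ f + Dminus γ g := by
  rw [← DmL_apply, map_add]; rfl
lemma Dminus_smul (γ : Fin 2) (a : ℂ) (f : P4) : Dminus γ (a • f) = a • Dminus γ f := by
  rw [← DmL_apply, map_smul]; rfl
lemma Dminus_zero (γ : Fin 2) : Dminus γ (0 : P4) = 0 := by
  rw [← DmL_apply, map_zero]

lemma Dplus_mul (β : Fin 2) (f g : P4) :
    Dplus β (f * g) = Dplus β f * g + f * Dplus β g := by
  simp only [Dplus, pderiv_mul]; ring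
lemma Dminus_mul (γ : Fin 2) (f g : P4) :
    Dminus γ (f * g) = Dminus γ f * g + f * Dminus γ g := by
  simp only [Dminus, pderiv_mul]; ring

lemma Dplus_C (β : Fin 2) (a : ℂ) : Dplus β (C a : P4) = 0 := by
  simp [Dplus, pderiv_C]
lemma Dminus_one (γ : Fin 2) : Dminus γ (1 : P4) = 0 := by
  simp [Dminus, pderiv_one]

lemma Dplus_Dplus (b c : Fin 2) (f : P4) : Dplus b (Dplus c f) = Dplus c (Dplus b f) := by
  simp only [Dplus, map_add]
  rw [pd_comm (yvar b) (yvar c) f, pd_comm (yvar b) (zvar c) f,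
    pd_comm (zvar b) (yvar c) f, pd_comm (zvar b) (zvar c) f]
  abel
lemma Dminus_Dplus (c b : Fin 2) (f : P4) : Dminus c (Dplus b f) = Dplus b (Dminus c f) := by
  simp only [Dplus, Dminus, map_add, map_sub]
  rw [pd_comm (yvar c) (yvar b) f, pd_comm (yvar c) (zvar b) f,
    pd_comm (zvar c) (yvar b) f, pd_comm (zvar c) (zvar b) f]
  abel
lemma Dminus_Dminus (b c : Fin 2) (f : P4) : Dminus b (Dminus c f) = Dminus c (Dminus b f) := by
  simp only [Dminus, map_sub]
  rw [pd_comm (yvar b) (yvar c) f, pd_comm (yvar b) (zvar c) f,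
    pd_comm (zvar b) (yvar c) f, pd_comm (zvar b) (zvar c) f]
  abel

-- list version of applyIter
def appL (D : Fin 2 → P4 → P4) (l : List (Fin 2)) (f : P4) : P4 :=
  l.foldr (fun b acc => D b acc) f

lemma applyIter_eq (D : Fin 2 → P4 → P4) {k : ℕ} (v : Fin k → Fin 2) (f : P4) :
    applyIter D v f = appL D (List.ofFn v) f := rfl

@[simp] lemma appL_nil (D : Fin 2 → P4 → P4) (f : P4) : appL D [] f = f := rfl
@[simp] lemma appL_cons (D : Fin 2 → P4 → P4) (b : Fin 2) (l : List (Fin 2)) (f : P4) :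
    appL D (b :: l) f = D b (appL D l f) := rfl

section appLgen
variable {D : Fin 2 → P4 → P4}

lemma appL_add (hD : ∀ b x y, D b (x + y) = D b x + D b y) (l : List (Fin 2)) (f g : P4) :
    appL D l (f + g) = appL D l f + appL D l g := by
  induction l with
  | nil => rfl
  | cons b t ih => rw [appL_cons, appL_cons, appL_cons, ih, hD]

lemma appL_smul (hD : ∀ b (a : ℂ) x, D b (a • x) = a • D b x) (l : List (Fin 2)) (a : ℂ) (f : P4) :
    appL D l (a • f) = a • appL D l f := by
  induction l with
  | nil => rfl
  | cons b t ih => rw [appL_cons, appL_cons, ih, hD]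

lemma appL_zero (hD : ∀ b, D b 0 = 0) (l : List (Fin 2)) :
    appL D l (0 : P4) = 0 := by
  induction l with
  | nil => rfl
  | cons b t ih => rw [appL_cons, ih, hD]

lemma appL_comm {E : P4 → P4} (hE : ∀ b x, E (D b x) = D b (E x)) (l : List (Fin 2)) (f : P4) :
    E (appL D l f) = appL D l (E f) := by
  induction l with
  | nil => rfl
  | cons b t ih => rw [appL_cons, appL_cons, hE, ih]

end appLgen

-- degree lemmas
lemma totalDegree_pderiv_le (i : Fin 4) (f : P4) (n : ℕ) (h : f.totalDegree ≤ n + 1) :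
    (pderiv i f).totalDegree ≤ n := by
  conv_lhs => rw [← support_sum_monomial_coeff f]
  rw [map_sum]
  apply totalDegree_finsetSum_le
  intro m hm
  rw [pderiv_monomial]
  rcases Nat.eq_zero_or_pos (m i) with h0 | h0
  · simp [h0]
  · refine (totalDegree_monomial_le _ _).trans ?_
    have hle : Finsupp.single i 1 ≤ m := by
      rw [Finsupp.single_le_iff]; exact h0
    have hsum : (m - Finsupp.single i 1).sum (fun _ e => e) + (Finsupp.single i (1:ℕ)).sum (fun _ e => e)
        = m.sum (fun _ e => e) := by
      rw [← Finsupp.sum_add_index' (fun _ => rfl) (fun _ b₁ b₂ => rfl), tsub_add_cancel_of_le hle]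
    have hsingle : (Finsupp.single i (1:ℕ)).sum (fun _ e => e) = 1 :=
      Finsupp.sum_single_index rfl
    have hm' : m.sum (fun _ e => e) ≤ n + 1 := le_trans (le_totalDegree hm) h
    have key : ((m - Finsupp.single i 1).sum fun _ e => e) ≤ n := by omega
    exact key

lemma totalDegree_Dplus_le (β : Fin 2) (f : P4) (n : ℕ) (h : f.totalDegree ≤ n + 1) :
    (Dplus β f).totalDegree ≤ n := by
  refine (totalDegree_add _ _).trans ?_
  exact max_le (totalDegree_pderiv_le _ _ _ h) (totalDegree_pderiv_le _ _ _ h)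

lemma Dplus_of_deg_zero (β : Fin 2) (f : P4) (h : f.totalDegree = 0) : Dplus β f = 0 := by
  have hy : yvar β ∉ f.vars := by
    intro hmem
    obtain ⟨m, hm, hmi⟩ := (mem_vars _).1 hmem
    have := (totalDegree_eq_zero_iff (Fin 4) f).1 h m hm (yvar β)
    exact absurd this (Finsupp.mem_support_iff.1 hmi)
  have hz : zvar β ∉ f.vars := by
    intro hmem
    obtain ⟨m, hm, hmi⟩ := (mem_vars _).1 hmem
    have := (totalDegree_eq_zero_iff (Fin 4) f).1 h m hm (zvar β)
    exact absurd this (Finsupp.mem_support_iff.1 hmi)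
  simp [Dplus, pderiv_eq_zero_of_notMem_vars hy, pderiv_eq_zero_of_notMem_vars hz]

lemma appP_deg : ∀ (l : List (Fin 2)) (f : P4) (n : ℕ),
    f.totalDegree ≤ n + l.length → (appL Dplus l f).totalDegree ≤ n := by
  intro l
  induction l with
  | nil => intro f n h; simpa using h
  | cons b t ih =>
    intro f n h
    rw [appL_cons]
    have : (appL Dplus t f).totalDegree ≤ n + 1 := by
      apply ih; simpa [Nat.add_assoc, Nat.add_comm 1 t.length] using h
    exact totalDegree_Dplus_le _ _ _ this

lemma appP_eq_zero (l : List (Fin 2)) (f : P4) (h : f.totalDegree < l.length) :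
    appL Dplus l f = 0 := by
  cases l with
  | nil => simp at h
  | cons b t =>
    rw [appL_cons]
    have hdeg : (appL Dplus t f).totalDegree = 0 := by
      have := appP_deg t f 0 (by simpa using Nat.lt_succ_iff.1 h)
      omega
    exact Dplus_of_deg_zero _ _ hdeg

-- the inner sum
def S (k : ℕ) (f g : P4) : P4 :=
  ∑ idx : Fin k → Fin 2 × Fin 2,
    (∏ j, eps (idx j).1 (idx j).2) •
      (applyIter Dplus (fun j => (idx j).1) f *
        applyIter Dminus (fun j => (idx j).2) g)

def cf (k : ℕ) : ℂ := Complex.I ^ k / (Nat.factorial k : ℂ)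

def hsN (N : ℕ) (f g : P4) : P4 := ∑ k ∈ Finset.range N, cf k • S k f g

lemma hsStar_eq_hsN (f g : P4) : hsStar f g = hsN (f.totalDegree + 1) f g := rfl

lemma S_zero (f g : P4) : S 0 f g = f * g := by
  rw [S]
  rw [Fintype.sum_unique]
  simp [applyIter]

lemma S_succ' (k : ℕ) (f g : P4) :
    S (k+1) f g = ∑ p : Fin 2 × Fin 2, eps p.1 p.2 • S k (Dplus p.1 f) (Dminus p.2 g) := by
  rw [S, ← Equiv.sum_comp (Fin.consEquiv fun _ : Fin (k+1) => Fin 2 × Fin 2)]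
  rw [Fintype.sum_prod_type]
  refine Finset.sum_congr rfl fun p _ => ?_
  conv_rhs => rw [S, Finset.smul_sum]
  refine Finset.sum_congr rfl fun v _ => ?_
  have hfst : (fun j => ((Fin.consEquiv (fun _ : Fin (k+1) => Fin 2 × Fin 2)) (p, v) j).1)
      = Fin.cons p.1 (fun j => (v j).1) := by
    funext j
    refine Fin.cases ?_ (fun j => ?_) j <;> simp [Fin.consEquiv]
  have hsnd : (fun j => ((Fin.consEquiv (fun _ : Fin (k+1) => Fin 2 × Fin 2)) (p, v) j).2)
      = Fin.cons p.2 (fun j => (v j).2) := by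
    funext j
    refine Fin.cases ?_ (fun j => ?_) j <;> simp [Fin.consEquiv]
  have happ : ∀ (D : Fin 2 → P4 → P4) (b : Fin 2) (w : Fin k → Fin 2) (x : P4),
      applyIter D (Fin.cons b w) x = D b (applyIter D w x) := by
    intro D b w x
    rw [applyIter_eq, applyIter_eq, List.ofFn_succ]
    simp [Fin.cons_zero, Fin.cons_succ, appL]
  have hprod : (∏ j : Fin (k+1),
        eps ((Fin.consEquiv (fun _ : Fin (k+1) => Fin 2 × Fin 2)) (p, v) j).1
          ((Fin.consEquiv (fun _ : Fin (k+1) => Fin 2 × Fin 2)) (p, v) j).2)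
      = eps p.1 p.2 * ∏ j : Fin k, eps (v j).1 (v j).2 := by
    rw [Fin.prod_univ_succ]
    simp [Fin.consEquiv]
  have hcp : Dplus p.1 (applyIter Dplus (fun j => (v j).1) f)
      = applyIter Dplus (fun j => (v j).1) (Dplus p.1 f) := by
    rw [applyIter_eq, applyIter_eq]
    exact appL_comm (fun b x => Dplus_Dplus p.1 b x) _ _
  have hcm : Dminus p.2 (applyIter Dminus (fun j => (v j).2) g)
      = applyIter Dminus (fun j => (v j).2) (Dminus p.2 g) := by
    rw [applyIter_eq, applyIter_eq]
    exact appL_comm (fun b x => Dminus_Dminus p.2 b x) _ _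
  rw [hprod, hfst, hsnd, happ, happ, hcp, hcm, mul_smul]

@[simp] lemma eps_00 : eps 0 0 = 0 := by simp [eps]
@[simp] lemma eps_01 : eps 0 1 = 1 := by simp [eps]
@[simp] lemma eps_10 : eps 1 0 = -1 := by simp [eps]
@[simp] lemma eps_11 : eps 1 1 = 0 := by simp [eps]

lemma S_succ (k : ℕ) (f g : P4) :
    S (k+1) f g = S k (Dplus 0 f) (Dminus 1 g) - S k (Dplus 1 f) (Dminus 0 g) := by
  rw [S_succ', Fintype.sum_prod_type, Fin.sum_univ_two, Fin.sum_univ_two, Fin.sum_univ_two]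
  simp [sub_eq_add_neg]

-- linearity of S
lemma appP_add' (l : List (Fin 2)) (f g : P4) :
    appL Dplus l (f + g) = appL Dplus l f + appL Dplus l g :=
  appL_add Dplus_add l f g
lemma appM_add' (l : List (Fin 2)) (f g : P4) :
    appL Dminus l (f + g) = appL Dminus l f + appL Dminus l g :=
  appL_add Dminus_add l f g

lemma S_add_left (k : ℕ) (f₁ f₂ g : P4) : S k (f₁ + f₂) g = S k f₁ g + S k f₂ g := by
  simp only [S, applyIter_eq, appP_add', add_mul, smul_add, Finset.sum_add_distrib]

lemma S_add_right (k : ℕ) (f g₁ g₂ : P4) : S k f (g₁ + g₂) = S k f g₁ + S k f g₂ := by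
  simp only [S, applyIter_eq, appM_add', mul_add, smul_add, Finset.sum_add_distrib]

lemma S_smul_left (k : ℕ) (a : ℂ) (f g : P4) : S k (a • f) g = a • S k f g := by
  simp only [S, applyIter_eq, appL_smul Dplus_smul, smul_mul_assoc, Finset.smul_sum]
  exact Finset.sum_congr rfl fun v _ => smul_comm _ _ _

lemma S_smul_right (k : ℕ) (a : ℂ) (f g : P4) : S k f (a • g) = a • S k f g := by
  simp only [S, applyIter_eq, appL_smul Dminus_smul, mul_smul_comm, Finset.smul_sum]
  exact Finset.sum_congr rfl fun v _ => smul_comm _ _ _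

lemma S_zero_right (k : ℕ) (f : P4) : S k f 0 = 0 := by
  simp [S, applyIter_eq, appL_zero Dminus_zero]

lemma S_sub_left (k : ℕ) (f₁ f₂ g : P4) : S k (f₁ - f₂) g = S k f₁ g - S k f₂ g := by
  have : f₁ - f₂ = f₁ + (-1 : ℂ) • f₂ := by simp [sub_eq_add_neg]
  rw [this, S_add_left, S_smul_left]; simp [sub_eq_add_neg]

lemma S_eq_zero (k : ℕ) (f g : P4) (h : f.totalDegree < k) : S k f g = 0 := by
  rw [S]
  apply Finset.sum_eq_zero
  intro idx _
  have hz : applyIter Dplus (fun j => (idx j).1) f = 0 := by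
    rw [applyIter_eq]
    exact appP_eq_zero _ _ (by simpa using h)
  simp [hz]

lemma hsN_eq_hsStar (N : ℕ) (f g : P4) (h : f.totalDegree + 1 ≤ N) :
    hsN N f g = hsStar f g := by
  rw [hsStar_eq_hsN, hsN, hsN]
  refine (Finset.sum_subset (Finset.range_subset_range.2 h) ?_).symm
  intro k _ hk
  rw [S_eq_zero k f g (by simp at hk; omega), smul_zero]

-- hsStar bilinearity
lemma hsStar_add_right (f g₁ g₂ : P4) :
    hsStar f (g₁ + g₂) = hsStar f g₁ + hsStar f g₂ := by
  simp only [hsStar_eq_hsN, hsN, S_add_right, smul_add, Finset.sum_add_distrib]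

lemma hsStar_smul_right (a : ℂ) (f g : P4) : hsStar f (a • g) = a • hsStar f g := by
  simp only [hsStar_eq_hsN, hsN, S_smul_right, Finset.smul_sum]
  exact Finset.sum_congr rfl fun k _ => smul_comm _ _ _

lemma hsStar_add_left (f₁ f₂ g : P4) :
    hsStar (f₁ + f₂) g = hsStar f₁ g + hsStar f₂ g := by
  set N := max f₁.totalDegree f₂.totalDegree + 1 with hN
  have h1 : f₁.totalDegree + 1 ≤ N := by omega
  have h2 : f₂.totalDegree + 1 ≤ N := by omega
  have h12 : (f₁ + f₂).totalDegree + 1 ≤ N := by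
    have := totalDegree_add f₁ f₂; omega
  rw [← hsN_eq_hsStar N _ _ h12, ← hsN_eq_hsStar N _ _ h1, ← hsN_eq_hsStar N _ _ h2]
  simp only [hsN, S_add_left, smul_add, Finset.sum_add_distrib]

lemma hsStar_smul_left (a : ℂ) (f g : P4) : hsStar (a • f) g = a • hsStar f g := by
  have h : (a • f).totalDegree + 1 ≤ f.totalDegree + 1 := by
    have := totalDegree_smul_le a f; omega
  rw [← hsN_eq_hsStar (f.totalDegree + 1) _ _ h, hsStar_eq_hsN]
  simp only [hsN, S_smul_left, Finset.smul_sum]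
  exact Finset.sum_congr rfl fun k _ => smul_comm _ _ _

lemma hsStar_sub_left (f₁ f₂ g : P4) :
    hsStar (f₁ - f₂) g = hsStar f₁ g - hsStar f₂ g := by
  have : f₁ - f₂ = f₁ + (-1 : ℂ) • f₂ := by simp [sub_eq_add_neg]
  rw [this, hsStar_add_left, hsStar_smul_left]; simp [sub_eq_add_neg]

lemma hsStar_sub_right (f g₁ g₂ : P4) :
    hsStar f (g₁ - g₂) = hsStar f g₁ - hsStar f g₂ := by
  have : g₁ - g₂ = g₁ + (-1 : ℂ) • g₂ := by simp [sub_eq_add_neg]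
  rw [this, hsStar_add_right, hsStar_smul_right]; simp [sub_eq_add_neg]

-- Leibniz of Dminus over S and hsStar
lemma Dminus_S (d : Fin 2) (k : ℕ) (f g : P4) :
    Dminus d (S k f g) = S k (Dminus d f) g + S k f (Dminus d g) := by
  rw [show Dminus d (S k f g) = DmL d (S k f g) from rfl, S, map_sum]
  simp only [map_smul, DmL_apply]
  have : ∀ idx : Fin k → Fin 2 × Fin 2,
      Dminus d (applyIter Dplus (fun j => (idx j).1) f * applyIter Dminus (fun j => (idx j).2) g)
        = applyIter Dplus (fun j => (idx j).1) (Dminus d f) * applyIter Dminus (fun j => (idx j).2) g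
          + applyIter Dplus (fun j => (idx j).1) f * applyIter Dminus (fun j => (idx j).2) (Dminus d g) := by
    intro idx
    rw [Dminus_mul]
    congr 1
    · congr 1
      rw [applyIter_eq, applyIter_eq]
      exact appL_comm (fun b x => Dminus_Dplus d b x) _ _
    · congr 1
      rw [applyIter_eq, applyIter_eq]
      exact appL_comm (fun b x => Dminus_Dminus d b x) _ _
  simp only [this, smul_add, Finset.sum_add_distrib]
  rfl

lemma totalDegree_Dminus_le (d : Fin 2) (f : P4) : (Dminus d f).totalDegree ≤ f.totalDegree := by
  refine (totalDegree_sub _ _).trans ?_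
  refine max_le ?_ ?_ <;>
    exact totalDegree_pderiv_le _ _ _ (by omega)

lemma Dminus_hsStar (d : Fin 2) (f g : P4) :
    Dminus d (hsStar f g) = hsStar (Dminus d f) g + hsStar f (Dminus d g) := by
  have hdeg : (Dminus d f).totalDegree + 1 ≤ f.totalDegree + 1 := by
    have := totalDegree_Dminus_le d f; omega
  rw [← hsN_eq_hsStar (f.totalDegree + 1) _ _ hdeg, hsStar_eq_hsN, hsStar_eq_hsN]
  rw [show Dminus d (hsN (f.totalDegree + 1) f g) = DmL d (hsN (f.totalDegree + 1) f g) from rfl,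
    hsN, map_sum]
  simp only [map_smul, DmL_apply, Dminus_S, smul_add, Finset.sum_add_distrib, hsN]

-- Dplus applied to variables
def dp (β : Fin 2) (i : Fin 4) : ℂ := if i = yvar β ∨ i = zvar β then 1 else 0

lemma Dplus_X (β : Fin 2) (i : Fin 4) : Dplus β (X i : P4) = C (dp β i) := by
  have hyz : yvar β ≠ zvar β := by
    fin_cases β <;> simp [yvar, zvar]
  by_cases h1 : i = yvar β
  · subst h1
    rw [Dplus, pderiv_X_self, pderiv_X_of_ne hyz]
    simp [dp]
  · by_cases h2 : i = zvar β
    · subst h2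
      rw [Dplus, pderiv_X_self, pderiv_X_of_ne hyz.symm]
      simp [dp, h1]
    · rw [Dplus, pderiv_X_of_ne (fun h => h1 h), pderiv_X_of_ne (fun h => h2 h)]
      simp [dp, h1, h2]

lemma S_X_mul (i : Fin 4) : ∀ (k : ℕ) (f g : P4),
    S (k+1) (X i * f) g = X i * S (k+1) f g +
      ((k:ℂ)+1) • (dp 0 i • S k f (Dminus 1 g) - dp 1 i • S k f (Dminus 0 g)) := by
  intro k
  induction k with
  | zero =>
    intro f g
    have e0 : Dplus 0 (X i * f) = dp 0 i • f + X i * Dplus 0 f := by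
      rw [Dplus_mul, Dplus_X, C_mul']
    have e1 : Dplus 1 (X i * f) = dp 1 i • f + X i * Dplus 1 f := by
      rw [Dplus_mul, Dplus_X, C_mul']
    rw [S_succ, S_succ, e0, e1]
    simp only [S_zero, S_add_left, S_smul_left]
    simp only [smul_eq_C_mul, Nat.cast_zero, map_add, map_one, map_zero, zero_add]
    ring
  | succ k ih =>
    intro f g
    have e0 : Dplus 0 (X i * f) = dp 0 i • f + X i * Dplus 0 f := by
      rw [Dplus_mul, Dplus_X, C_mul']
    have e1 : Dplus 1 (X i * f) = dp 1 i • f + X i * Dplus 1 f := by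
      rw [Dplus_mul, Dplus_X, C_mul']
    rw [S_succ (k+1) (X i * f) g, e0, e1, S_add_left, S_add_left,
      S_smul_left, S_smul_left, ih (Dplus 0 f) (Dminus 1 g), ih (Dplus 1 f) (Dminus 0 g),
      S_succ (k+1) f g, S_succ k f (Dminus 1 g), S_succ k f (Dminus 0 g),
      Dminus_Dminus 0 1 g]
    push_cast
    simp only [smul_eq_C_mul, map_add, map_one]
    ring

lemma cf_succ_mul (k : ℕ) : cf (k+1) * ((k:ℂ)+1) = Complex.I * cf k := by
  unfold cf
  rw [Nat.factorial_succ]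
  have h1 : ((Nat.factorial k : ℂ)) ≠ 0 := Nat.cast_ne_zero.2 (Nat.factorial_ne_zero k)
  have h2 : ((k:ℂ)+1) ≠ 0 := by
    have := Nat.cast_add_one_ne_zero (R := ℂ) k
    simpa using this
  push_cast
  field_simp
  ring

lemma hsStar_X_mul (i : Fin 4) (f g : P4) :
    hsStar (X i * f) g = X i * hsStar f g +
      Complex.I • (dp 0 i • hsStar f (Dminus 1 g) - dp 1 i • hsStar f (Dminus 0 g)) := by
  have hdeg : (X i * f).totalDegree + 1 ≤ f.totalDegree + 1 + 1 := by
    have h1 := totalDegree_mul (X i : P4) f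
    have h2 : (X i : P4).totalDegree = 1 := totalDegree_X i
    omega
  rw [← hsN_eq_hsStar (f.totalDegree + 1 + 1) _ _ hdeg, hsN, Finset.sum_range_succ']
  have hterm : ∀ k, cf (k+1) • S (k+1) (X i * f) g
      = cf (k+1) • (X i * S (k+1) f g)
        + Complex.I • (cf k • (dp 0 i • S k f (Dminus 1 g) - dp 1 i • S k f (Dminus 0 g))) := by
    intro k
    rw [S_X_mul i k f g, smul_add, smul_smul, smul_smul, cf_succ_mul]
  have hS0' : cf 0 • S 0 (X i * f) g = cf 0 • (X i * S 0 f g) := by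
    rw [S_zero, S_zero, mul_assoc]
  have h1 : (∑ k ∈ Finset.range (f.totalDegree + 1), cf (k+1) • S (k+1) (X i * f) g)
        + cf 0 • S 0 (X i * f) g
      = ((∑ k ∈ Finset.range (f.totalDegree + 1), cf (k+1) • (X i * S (k+1) f g))
          + cf 0 • (X i * S 0 f g))
        + ∑ k ∈ Finset.range (f.totalDegree + 1),
            Complex.I • (cf k • (dp 0 i • S k f (Dminus 1 g) - dp 1 i • S k f (Dminus 0 g))) := by
    rw [hS0']
    simp only [hterm, Finset.sum_add_distrib]
    abel
  have h2 : X i * hsStar f g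
      = ((∑ k ∈ Finset.range (f.totalDegree + 1), cf (k+1) • (X i * S (k+1) f g))
          + cf 0 • (X i * S 0 f g)) := by
    rw [← hsN_eq_hsStar (f.totalDegree + 1 + 1) f g (by omega), hsN,
      Finset.sum_range_succ', mul_add, Finset.mul_sum]
    simp only [mul_smul_comm]
  have h3 : (∑ k ∈ Finset.range (f.totalDegree + 1),
        Complex.I • (cf k • (dp 0 i • S k f (Dminus 1 g) - dp 1 i • S k f (Dminus 0 g))))
      = Complex.I • (dp 0 i • hsStar f (Dminus 1 g) - dp 1 i • hsStar f (Dminus 0 g)) := by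
    rw [hsStar_eq_hsN, hsStar_eq_hsN, hsN, hsN, ← Finset.smul_sum]
    congr 1
    rw [Finset.smul_sum, Finset.smul_sum, ← Finset.sum_sub_distrib]
    refine Finset.sum_congr rfl fun k _ => ?_
    rw [smul_sub, smul_comm (cf k) (dp 0 i), smul_comm (cf k) (dp 1 i)]
  rw [h1, h3, h2]

lemma hsStar_one_left (f : P4) : hsStar 1 f = f := by
  rw [hsStar_eq_hsN, totalDegree_one, hsN]
  simp [cf, S_zero]

lemma hsStar_one_right (f : P4) : hsStar f 1 = f := by
  rw [hsStar_eq_hsN, hsN, Finset.sum_range_succ']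
  have hz : ∀ k, cf (k+1) • S (k+1) f 1 = 0 := by
    intro k
    rw [S_succ, Dminus_one, Dminus_one, S_zero_right, S_zero_right]
    simp
  rw [Finset.sum_eq_zero (fun k _ => hz k), zero_add]
  simp [cf, S_zero]

lemma hsStar_assoc (f g h : P4) : hsStar (hsStar f g) h = hsStar f (hsStar g h) := by
  induction f using MvPolynomial.induction_on generalizing g h with
  | C a =>
    have hc : ∀ u : P4, hsStar (C a) u = a • u := by
      intro u
      rw [hsStar_eq_hsN, totalDegree_C, hsN]
      simp [cf, S_zero, C_mul']
    rw [hc, hc, hsStar_smul_left]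
  | add p q hp hq =>
    rw [hsStar_add_left, hsStar_add_left, hsStar_add_left, hp, hq]
  | mul_X p i hp =>
    rw [mul_comm p (X i)]
    rw [hsStar_X_mul, hsStar_add_left, hsStar_smul_left, hsStar_sub_left,
      hsStar_smul_left, hsStar_smul_left, hsStar_X_mul, hsStar_X_mul,
      Dminus_hsStar, Dminus_hsStar, hsStar_add_right, hsStar_add_right]
    simp only [hp]
    simp only [smul_sub, smul_add]
    abel

/-- The higher-spin star product on ℂ[z¹,z²,y¹,y²] is associative and unital. -/
theorem hsStar_assoc_unital (f g h : P4) :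
    hsStar (hsStar f g) h = hsStar f (hsStar g h) ∧
    hsStar 1 f = f ∧ hsStar f 1 = f := by
  exact ⟨hsStar_assoc f g h, hsStar_one_left f, hsStar_one_right f⟩

end
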